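/- arXiv:2009.10349 — 3 statements merged into one kernel-verified Lean document; each statement's English description precedes it below -/
import Mathlib

section
/- Let G be a finite connected simple graph with positive edge weights whose vertex set is partitioned into two sets V1 and V2, and suppose the weighted adjacency matrix A12 of the connections between V1 and V2 (the |V1| × |V2| matrix whose (u,v) entry is the weight of the edge between u ∈ V1 and v ∈ V2, and 0 if there is no such edge) has rank 1. Let k = {r,s} be an edge with both endpoints in V1 such that G − k is connected, and let P be a balanced injection vector (entries summing to 0). If F denotes the edge flows in G with injection P and F' denotes the edge flows in G − k with the same injection P, then F'_{mn} = F_{mn} for every edge {m,n} with both endpoints in V2. -/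
open scoped Classical

/-- The weighted Laplacian `L = B W Bᵀ` of `G`, written out entrywise. -/
noncomputable def wLap {V : Type*} [Fintype V] [DecidableEq V]
    (G : SimpleGraph V) (w : Sym2 V → ℝ) : Matrix V V ℝ :=
  Matrix.of fun u v =>
    if u = v then ∑ x ∈ Finset.univ.filter (fun x => G.Adj u x), w s(u, x)
    else if G.Adj u v then -w s(u, v) else 0

/-! The difference `D = Vp' - Vp` satisfies `(L D)_v = 0` at every `v ∈ V2`, since deleting an
edge inside `V1` leaves the rows of the Laplacian at `V2` unchanged. Writing the nonnegative
rank-one block as `A12 = a bᵀ` with `a, b ≥ 0`, these row equations read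
`(L₂ + α diag b) x = 0` for `x = D - β / α` on `V2`, where `L₂` is the Laplacian of the subgraph
induced on `V2`, `α = Σ a_u` and `β = Σ a_u D_u`. Pairing with `x` gives
`½ Σ w_{mn} (x_m - x_n)² + α Σ b_v x_v² = 0`, so `x`, and hence `D`, is constant along every
edge inside `V2`. -/

theorem Matrix.mul_eq_mul_of_rank_le_one {m n K : Type*} [Fintype n] [Field K]
    {A : Matrix m n K} (hA : A.rank ≤ 1) (i i' : m) (j j' : n) :
    A i j * A i' j' = A i j' * A i' j := by
  obtain ⟨g, hg⟩ := finrank_le_one_iff.mp hA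
  have hcol : ∀ j, ∃ c : K, ∀ i, A i j = c * g.1 i := by
    intro j
    obtain ⟨c, hc⟩ := hg ⟨A.col j, Pi.single j 1, A.mulVec_single_one j⟩
    exact ⟨c, fun i => (congrFun (congrArg Subtype.val hc) i).symm⟩
  choose c hc using hcol
  simp only [hc]
  ring

theorem Matrix.exists_nonneg_factor_of_rank_eq_one {m n : Type*} [Fintype m] [Fintype n]
    {A : Matrix m n ℝ} (hA : ∀ i j, 0 ≤ A i j) (h1 : A.rank = 1) :
    ∃ a : m → ℝ, ∃ b : n → ℝ, (∀ i, 0 ≤ a i) ∧ (∀ j, 0 ≤ b j) ∧ (∃ i, 0 < a i) ∧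
      ∀ i j, A i j = a i * b j := by
  obtain ⟨i₀, j₀, hne⟩ : ∃ i j, A i j ≠ 0 := by
    by_contra! h
    rw [show A = 0 from Matrix.ext h, Matrix.rank_zero] at h1
    exact zero_ne_one h1
  have hpos : 0 < A i₀ j₀ := (hA i₀ j₀).lt_of_ne' hne
  refine ⟨fun i => A i j₀, fun j => A i₀ j / A i₀ j₀, fun i => hA i j₀,
    fun j => div_nonneg (hA i₀ j) hpos.le, ⟨i₀, hpos⟩, fun i j => ?_⟩
  rw [mul_div_assoc', eq_div_iff hne]
  exact Matrix.mul_eq_mul_of_rank_le_one h1.le i i₀ j j₀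

theorem sum_mul_sq_sub_eq_two_mul_sum_mul_sum {ι : Type*} [Fintype ι] {W : Matrix ι ι ℝ}
    (hW : ∀ i j, W i j = W j i) (x : ι → ℝ) :
    ∑ i, ∑ j, W i j * (x i - x j) ^ 2 = 2 * ∑ i, x i * ∑ j, W i j * (x i - x j) := by
  have hswap : ∑ i, ∑ j, W i j * x j * (x i - x j) = -∑ i, ∑ j, W i j * x i * (x i - x j) := by
    rw [Finset.sum_comm, ← Finset.sum_neg_distrib]
    refine Finset.sum_congr rfl fun i _ => ?_
    rw [← Finset.sum_neg_distrib]
    refine Finset.sum_congr rfl fun j _ => ?_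
    rw [hW]
    ring
  calc ∑ i, ∑ j, W i j * (x i - x j) ^ 2
      = ∑ i, ∑ j, W i j * x i * (x i - x j) - ∑ i, ∑ j, W i j * x j * (x i - x j) := by
        simp only [← Finset.sum_sub_distrib]
        congr! 2
        ring
    _ = 2 * ∑ i, ∑ j, W i j * x i * (x i - x j) := by rw [hswap]; ring
    _ = 2 * ∑ i, x i * ∑ j, W i j * (x i - x j) := by
        simp only [Finset.mul_sum]
        congr! 2
        ring

theorem eq_of_sum_mul_sub_add_mul_eq_zero {ι : Type*} [Fintype ι] {W : Matrix ι ι ℝ}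
    (hW : ∀ i j, W i j = W j i) (hW0 : ∀ i j, 0 ≤ W i j) {c x : ι → ℝ} (hc : ∀ i, 0 ≤ c i)
    (hx : ∀ i, ∑ j, W i j * (x i - x j) + c i * x i = 0) {i j : ι} (hij : 0 < W i j) :
    x i = x j := by
  have hterm_nonneg : ∀ i j, 0 ≤ W i j * (x i - x j) ^ 2 := fun i j =>
    mul_nonneg (hW0 i j) (sq_nonneg _)
  have henergy : ∑ i, ∑ j, W i j * (x i - x j) ^ 2 = -2 * ∑ i, c i * x i ^ 2 := by
    rw [sum_mul_sq_sub_eq_two_mul_sum_mul_sum hW, Finset.mul_sum, Finset.mul_sum]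
    refine Finset.sum_congr rfl fun i _ => ?_
    linear_combination 2 * x i * hx i
  have hterm : W i j * (x i - x j) ^ 2 ≤ 0 :=
    calc W i j * (x i - x j) ^ 2 ≤ ∑ j, W i j * (x i - x j) ^ 2 :=
          Finset.single_le_sum (fun j _ => hterm_nonneg i j) (Finset.mem_univ j)
      _ ≤ ∑ i, ∑ j, W i j * (x i - x j) ^ 2 :=
          Finset.single_le_sum (fun i _ => Finset.sum_nonneg fun j _ => hterm_nonneg i j)
            (Finset.mem_univ i)
      _ ≤ 0 := by
          rw [henergy]
          nlinarith [Finset.sum_nonneg fun i (_ : i ∈ Finset.univ) =>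
            mul_nonneg (hc i) (sq_nonneg (x i))]
  have hsq : (x i - x j) ^ 2 = 0 :=
    le_antisymm (nonpos_of_mul_nonpos_right hterm hij) (sq_nonneg _)
  exact sub_eq_zero.mp (pow_eq_zero_iff two_ne_zero |>.mp hsq)

noncomputable def wAdj {V : Type*} (G : SimpleGraph V) (w : Sym2 V → ℝ) : Matrix V V ℝ :=
  Matrix.of fun u v => if G.Adj u v then w s(u, v) else 0

section wAdj

variable {V : Type*} {G : SimpleGraph V} {w : Sym2 V → ℝ}

theorem wAdj_comm (u v : V) : wAdj G w u v = wAdj G w v u := by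
  simp only [wAdj, Matrix.of_apply, G.adj_comm u v, Sym2.eq_swap]

theorem wAdj_nonneg (hw : ∀ e ∈ G.edgeSet, 0 < w e) (u v : V) : 0 ≤ wAdj G w u v := by
  simp only [wAdj, Matrix.of_apply]
  split_ifs with h
  exacts [(hw _ h).le, le_rfl]

theorem wAdj_pos (hw : ∀ e ∈ G.edgeSet, 0 < w e) {u v : V} (h : G.Adj u v) :
    0 < wAdj G w u v := by
  simpa [wAdj, h] using hw _ h

theorem wAdj_deleteEdges_of_notMem {e : Sym2 V} {v : V} (hv : v ∉ e) :
    wAdj (G.deleteEdges {e}) w v = wAdj G w v := by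
  ext u
  have : s(v, u) ≠ e := fun h => hv (h ▸ Sym2.mem_mk_left v u)
  simp [wAdj, SimpleGraph.deleteEdges_adj, this]

variable [Fintype V] [DecidableEq V]

theorem wLap_eq_diagonal_sub_wAdj (G : SimpleGraph V) (w : Sym2 V → ℝ) :
    wLap G w = Matrix.diagonal (fun u => ∑ v, wAdj G w u v) - wAdj G w := by
  ext u v
  by_cases h : u = v
  · subst h
    simp [wLap, wAdj, Finset.sum_filter]
  · simp only [wLap, wAdj, Matrix.of_apply, h, if_false, Matrix.sub_apply,
      Matrix.diagonal_apply_ne _ h, zero_sub]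
    split_ifs <;> simp

theorem wLap_mulVec_apply (G : SimpleGraph V) (w : Sym2 V → ℝ) (x : V → ℝ) (u : V) :
    (wLap G w).mulVec x u = ∑ v, wAdj G w u v * (x u - x v) := by
  rw [wLap_eq_diagonal_sub_wAdj, Matrix.sub_mulVec, Pi.sub_apply, Matrix.mulVec_diagonal,
    Finset.sum_mul]
  simp only [Matrix.mulVec, dotProduct, mul_sub, Finset.sum_sub_distrib, mul_comm]

end wAdj

theorem eq_of_adj_of_wLap_mulVec_eq_zero_of_rank_eq_one {V : Type*} [Fintype V] [DecidableEq V]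
    {G : SimpleGraph V} {w : Sym2 V → ℝ} (hw : ∀ e ∈ G.edgeSet, 0 < w e) {S : Set V}
    (hrank : ((wAdj G w).submatrix ((↑) : {u // u ∈ S} → V) ((↑) : {v // v ∉ S} → V)).rank = 1)
    {D : V → ℝ} (hD : ∀ v ∉ S, (wLap G w).mulVec D v = 0)
    {m n : V} (hm : m ∉ S) (hn : n ∉ S) (hmn : G.Adj m n) : D m = D n := by
  obtain ⟨a, b, ha, hb, ⟨u₀, hu₀⟩, hab⟩ :=
    Matrix.exists_nonneg_factor_of_rank_eq_one (fun _ _ => wAdj_nonneg hw _ _) hrank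
  set α := ∑ u, a u
  set β := ∑ u, a u * D u
  have hα : 0 < α := Finset.sum_pos' (fun u _ => ha u) ⟨u₀, Finset.mem_univ _, hu₀⟩
  let x : {v // v ∉ S} → ℝ := fun v => D v - β / α
  have hrow : ∀ v : {v // v ∉ S},
      ∑ u : {v // v ∉ S}, wAdj G w v u * (x v - x u) + α * b v * x v = 0 := by
    intro v
    have hcross : ∑ u : {u // u ∈ S}, wAdj G w v u * (D v - D u) = α * b v * x v :=
      calc ∑ u : {u // u ∈ S}, wAdj G w v u * (D v - D u)
          = ∑ u, (a u * D v - a u * D u) * b v :=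
            Finset.sum_congr rfl fun u _ => by
              rw [wAdj_comm, hab]
              ring
        _ = b v * (α * D v - β) := by
            rw [← Finset.sum_mul, Finset.sum_sub_distrib, ← Finset.sum_mul]
            ring
        _ = α * b v * x v := by
            simp only [x]
            field_simp
    have hv := hD v v.2
    rw [wLap_mulVec_apply, ← Fintype.sum_subtype_add_sum_subtype (· ∈ S), hcross,
      add_comm] at hv
    simpa only [x, sub_sub_sub_cancel_right] using hv
  have hxmn := eq_of_sum_mul_sub_add_mul_eq_zero
    (W := (wAdj G w).submatrix ((↑) : {v // v ∉ S} → V) (↑))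
    (fun u v => wAdj_comm u.1 v) (fun _ _ => wAdj_nonneg hw _ _)
    (fun v => mul_nonneg hα.le (hb v)) hrow (i := ⟨m, hm⟩) (j := ⟨n, hn⟩) (wAdj_pos hw hmn)
  simpa only [x, sub_left_inj] using hxmn

theorem network_isolator_no_flow_change_general
    {V : Type*} [Fintype V] [DecidableEq V] (G : SimpleGraph V)
    (w : Sym2 V → ℝ) (hw : ∀ e ∈ G.edgeSet, 0 < w e)
    (S : Set V)
    (hrank : Matrix.rank (Matrix.of fun (u : {x : V // x ∈ S}) (v : {x : V // x ∉ S}) =>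
        if G.Adj u.val v.val then w s(u.val, v.val) else 0) = 1)
    (r s : V) (hr : r ∈ S) (hs : s ∈ S)
    (P : V → ℝ)
    (Vp : V → ℝ) (hVp : Matrix.mulVec (wLap G w) Vp = P)
    (Vp' : V → ℝ) (hVp' : Matrix.mulVec (wLap (G.deleteEdges {s(r, s)}) w) Vp' = P) :
    ∀ m n : V, m ∉ S → n ∉ S → G.Adj m n →
      w s(m, n) * (Vp' m - Vp' n) = w s(m, n) * (Vp m - Vp n) := by
  intro m n hm hn hmn
  have hkS : ∀ v ∉ S, v ∉ s(r, s) := by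
    intro v hv hvk
    rcases Sym2.mem_iff.mp hvk with rfl | rfl <;> contradiction
  have hharm : ∀ v ∉ S, (wLap G w).mulVec (Vp' - Vp) v = 0 := by
    intro v hv
    have hv' := congrFun hVp' v
    rw [wLap_mulVec_apply, wAdj_deleteEdges_of_notMem (hkS v hv), ← wLap_mulVec_apply] at hv'
    rw [Matrix.mulVec_sub, Pi.sub_apply, hv', hVp, sub_self]
  have hD := eq_of_adj_of_wLap_mulVec_eq_zero_of_rank_eq_one hw hrank hharm hm hn hmn
  rw [Pi.sub_apply, Pi.sub_apply] at hD
  rw [sub_eq_sub_iff_sub_eq_sub.mpr hD]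

/-- **Network isolators suppress failure spreading.**  Let `G` be a finite
connected simple graph with positive edge weights whose vertex set is
partitioned into `V1 = S` and `V2 = Sᶜ`, and suppose the weighted adjacency
matrix `A12` of the connections between `V1` and `V2` has rank `1` (a
*network isolator*).  Let `k = {r,s}` be an edge with both endpoints in `V1`
such that `G - k` is connected, and let `P` be a balanced injection vector.
If `F` are the flows in `G` with injection `P` (potential `Vp`) and `F'` the
flows in `G - k` with the same injection (potential `Vp'`), then
`F'_{mn} = F_{mn}` for every edge `{m,n}` with both endpoints in `V2`. -/
theorem network_isolator_no_flow_change
    {V : Type*} [Fintype V] [DecidableEq V] (G : SimpleGraph V)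
    (w : Sym2 V → ℝ) (hw : ∀ e ∈ G.edgeSet, 0 < w e)
    (hG : G.Connected) (S : Set V)
    (hrank : Matrix.rank (Matrix.of fun (u : {x : V // x ∈ S}) (v : {x : V // x ∉ S}) =>
        if G.Adj u.val v.val then w s(u.val, v.val) else 0) = 1)
    (r s : V) (hr : r ∈ S) (hs : s ∈ S) (hrs : G.Adj r s)
    (hGk : (G.deleteEdges {s(r, s)}).Connected)
    (P : V → ℝ) (hP : ∑ u, P u = 0)
    (Vp : V → ℝ) (hVp : Matrix.mulVec (wLap G w) Vp = P)
    (Vp' : V → ℝ) (hVp' : Matrix.mulVec (wLap (G.deleteEdges {s(r, s)}) w) Vp' = P) :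
    ∀ m n : V, m ∉ S → n ∉ S → G.Adj m n →
      w s(m, n) * (Vp' m - Vp' n) = w s(m, n) * (Vp m - Vp n) :=
  network_isolator_no_flow_change_general G w hw S hrank r s hr hs P Vp hVp Vp' hVp'
end

section
/- Let G be a finite connected simple graph with positive edge weights, let k = {r,s} ∈ E(G) be an edge such that G − k is connected, and let P be a balanced injection vector. Let F denote the edge flows in G with injection P, and F' the edge flows in G − k with the same injection P. Then for every edge m ≠ k of G, the flow change satisfies F'_m − F_m = F_k · PTDF_{r,s,m} / (1 − PTDF_{r,s,k}), where F_k is the flow on k in G before its removal and PTDF_{r,s,m} is the flow on edge m in G under unit injection at r and withdrawal at s; the denominator 1 − PTDF_{r,s,k} is nonzero because G − k is connected. -/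
/-!
Deleting the edge `k = {r, s}` changes the Laplacian by the rank-one term `w_k b bᵀ`, where
`b = e_r - e_s`: `L_G x = L_{G-k} x + F_k(x) b`. Hence if `Lz = b` then `L_{G-k} z = (1 - PTDF_k) b`,
and with `c = F_k / (1 - PTDF_k)` the potential `Vp + c z` solves `L_{G-k} (Vp + c z) = P`
(a Sherman–Morrison update). The quadratic form of a weighted Laplacian is
`½ ∑_{u ~ v} w_{uv} (x_u - x_v)²`, so on a connected graph with positive weights its kernel
consists of the constants: potentials, hence flows, are determined by the injection. The same
fact shows `1 - PTDF_k ≠ 0`, since otherwise `z` would be harmonic on the connected graph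
`G - k`, forcing `z_r = z_s` and `PTDF_k = 0`.
-/

open scoped Classical

open Finset Matrix SimpleGraph

/-- The flow `F_{(a,b)}` for the potential `x`; for `L z = e_r - e_s` (`unitInjection r s`),
`edgeFlow w z a b` is `PTDF_{r,s,(a,b)}`. -/
def edgeFlow {V : Type*} (w : Sym2 V → ℝ) (x : V → ℝ) (a b : V) : ℝ :=
  w s(a, b) * (x a - x b)

theorem edgeFlow_swap {V : Type*} (w : Sym2 V → ℝ) (x : V → ℝ) (a b : V) :
    edgeFlow w x b a = -edgeFlow w x a b := by
  rw [edgeFlow, edgeFlow, Sym2.eq_swap]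
  ring

def unitInjection {V : Type*} [DecidableEq V] (r s : V) : V → ℝ :=
  fun u => (if u = r then (1 : ℝ) else 0) - (if u = s then (1 : ℝ) else 0)

section

variable {V : Type*} [Fintype V] [DecidableEq V] (G : SimpleGraph V) (w : Sym2 V → ℝ)

theorem wLap_mulVec_apply_s7 [DecidableRel G.Adj] (x : V → ℝ) (u : V) :
    (wLap G w *ᵥ x) u = ∑ v, if G.Adj u v then edgeFlow w x u v else 0 := by
  calc (wLap G w *ᵥ x) u
      = ∑ v, ((if u = v then (∑ y ∈ univ.filter (G.Adj u), w s(u, y)) * x u else 0) -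
          if G.Adj u v then w s(u, v) * x v else 0) := by
        refine sum_congr rfl fun v _ => ?_
        by_cases huv : u = v
        · subst huv
          simp only [wLap, of_apply, if_true, G.irrefl, if_false, sub_zero]
          congr
        · simp only [wLap, of_apply, huv, if_false]
          split_ifs <;> ring
    _ = _ := by
        rw [sum_sub_distrib, sum_ite_eq, if_pos (mem_univ _), sum_mul, sum_filter,
          ← sum_sub_distrib]
        refine sum_congr rfl fun v _ => ?_
        unfold edgeFlow
        split_ifs <;> ring

theorem dotProduct_wLap_mulVec_self (x : V → ℝ) :
    x ⬝ᵥ (wLap G w *ᵥ x) =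
      (∑ u, ∑ v, if G.Adj u v then w s(u, v) * (x u - x v) ^ 2 else 0) / 2 := by
  have hexpand : x ⬝ᵥ (wLap G w *ᵥ x) =
      ∑ u, ∑ v, (if G.Adj u v then w s(u, v) * (x u * (x u - x v)) else 0) := by
    simp only [dotProduct, wLap_mulVec_apply_s7, mul_sum, mul_ite, mul_zero]
    refine sum_congr rfl fun u _ => sum_congr rfl fun v _ => ?_
    unfold edgeFlow
    split_ifs <;> ring
  have hswap : ∑ u, ∑ v, (if G.Adj u v then w s(u, v) * (x u * (x u - x v)) else 0) =
      ∑ u, ∑ v, (if G.Adj u v then w s(u, v) * (x v * (x v - x u)) else 0) := by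
    rw [sum_comm]
    simp only [G.adj_comm, Sym2.eq_swap]
  rw [eq_div_iff two_ne_zero, mul_two, hexpand]
  nth_rewrite 2 [hswap]
  rw [← sum_add_distrib]
  refine sum_congr rfl fun u _ => ?_
  rw [← sum_add_distrib]
  refine sum_congr rfl fun v _ => ?_
  split_ifs <;> ring

variable {G w}

theorem apply_eq_of_adj_of_wLap_mulVec_eq_zero (hw : ∀ e ∈ G.edgeSet, 0 < w e) {x : V → ℝ}
    (hx : wLap G w *ᵥ x = 0) {u v : V} (huv : G.Adj u v) : x u = x v := by
  have hterm : ∀ u v, 0 ≤ if G.Adj u v then w s(u, v) * (x u - x v) ^ 2 else 0 := by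
    intro u v
    split_ifs with h
    · exact mul_nonneg (hw _ h).le (sq_nonneg _)
    · exact le_rfl
  have hsum := dotProduct_wLap_mulVec_self G w x
  rw [hx, dotProduct_zero, eq_comm, div_eq_zero_iff, or_iff_left two_ne_zero,
    sum_eq_zero_iff_of_nonneg fun u _ => sum_nonneg fun v _ => hterm u v] at hsum
  have huv0 := (sum_eq_zero_iff_of_nonneg fun v _ => hterm u v).1 (hsum u (mem_univ u)) v
    (mem_univ v)
  rw [if_pos huv, mul_eq_zero, or_iff_right (hw _ huv).ne', sq_eq_zero_iff, sub_eq_zero] at huv0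
  exact huv0

theorem SimpleGraph.Reachable.apply_eq_of_wLap_mulVec_eq_zero (hw : ∀ e ∈ G.edgeSet, 0 < w e)
    {x : V → ℝ} (hx : wLap G w *ᵥ x = 0) {u v : V} (huv : G.Reachable u v) : x u = x v := by
  obtain ⟨p⟩ := huv
  induction p with
  | nil => rfl
  | cons h _ ih => exact (apply_eq_of_adj_of_wLap_mulVec_eq_zero hw hx h).trans ih

theorem sub_eq_sub_of_wLap_mulVec_eq (hw : ∀ e ∈ G.edgeSet, 0 < w e) (hG : G.Connected)
    {x y : V → ℝ} (hxy : wLap G w *ᵥ x = wLap G w *ᵥ y) (a b : V) :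
    x a - x b = y a - y b := by
  have hker : wLap G w *ᵥ (x - y) = 0 := by rw [mulVec_sub, hxy, sub_self]
  have hab := (hG.preconnected a b).apply_eq_of_wLap_mulVec_eq_zero hw hker
  simp only [Pi.sub_apply] at hab
  linarith

theorem wLap_mulVec_eq_wLap_deleteEdges_mulVec_add {r s : V} (hrs : G.Adj r s) (x : V → ℝ) :
    wLap G w *ᵥ x =
      wLap (G.deleteEdges {s(r, s)}) w *ᵥ x + edgeFlow w x r s • unitInjection r s := by
  ext u
  have hsplit : ∀ v, (if G.Adj u v then edgeFlow w x u v else 0) =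
      (if (G.deleteEdges {s(r, s)}).Adj u v then edgeFlow w x u v else 0) +
        if s(u, v) = s(r, s) then edgeFlow w x u v else 0 := by
    intro v
    by_cases h : s(u, v) = s(r, s)
    · have hadj : G.Adj u v := by rw [← G.mem_edgeSet, h]; exact hrs
      simp [deleteEdges_adj, h, hadj]
    · simp [deleteEdges_adj, h]
  simp only [Pi.add_apply, Pi.smul_apply, smul_eq_mul, wLap_mulVec_apply_s7, hsplit, sum_add_distrib]
  rw [add_right_inj]
  by_cases hur : u = r
  · subst hur
    simp [unitInjection, hrs.ne]
  by_cases hus : u = s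
  · subst hus
    simpa [unitInjection, hur] using edgeFlow_swap w x r u
  · simp [unitInjection, hur, hus]

variable {r s : V} (hrs : G.Adj r s) {z : V → ℝ} (hz : wLap G w *ᵥ z = unitInjection r s)
include hrs hz

theorem wLap_deleteEdges_mulVec_of_unitInjection :
    wLap (G.deleteEdges {s(r, s)}) w *ᵥ z = (1 - edgeFlow w z r s) • unitInjection r s := by
  have hsplit := wLap_mulVec_eq_wLap_deleteEdges_mulVec_add (w := w) hrs z
  rw [hz] at hsplit
  rw [sub_smul, one_smul]
  exact eq_sub_of_add_eq hsplit.symm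

theorem one_sub_edgeFlow_ne_zero_of_unitInjection (hw : ∀ e ∈ G.edgeSet, 0 < w e)
    (hGk : (G.deleteEdges {s(r, s)}).Connected) : 1 - edgeFlow w z r s ≠ 0 := by
  intro hD
  have hker := wLap_deleteEdges_mulVec_of_unitInjection hrs hz
  rw [hD, zero_smul] at hker
  have hzrs := (hGk.preconnected r s).apply_eq_of_wLap_mulVec_eq_zero
    (fun e he => hw e (edgeSet_mono (deleteEdges_le _) he)) hker
  simp [edgeFlow, hzrs] at hD

theorem wLap_deleteEdges_mulVec_add_smul_of_unitInjection {P x : V → ℝ}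
    (hx : wLap G w *ᵥ x = P) (hD : 1 - edgeFlow w z r s ≠ 0) :
    wLap (G.deleteEdges {s(r, s)}) w *ᵥ (x + (edgeFlow w x r s / (1 - edgeFlow w z r s)) • z) =
      P := by
  have hsplit := wLap_mulVec_eq_wLap_deleteEdges_mulVec_add (w := w) hrs x
  rw [hx] at hsplit
  rw [mulVec_add, mulVec_smul, wLap_deleteEdges_mulVec_of_unitInjection hrs hz, smul_smul,
    div_mul_cancel₀ _ hD, eq_sub_of_add_eq hsplit.symm, sub_add_cancel]

end

theorem lodf_eq_ptdf_ratio_general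
    {V : Type*} [Fintype V] [DecidableEq V] (G : SimpleGraph V)
    (w : Sym2 V → ℝ) (hw : ∀ e ∈ G.edgeSet, 0 < w e)
    (r s : V) (hrs : G.Adj r s)
    (hGk : (G.deleteEdges {s(r, s)}).Connected)
    (P : V → ℝ)
    (Vp : V → ℝ) (hVp : Matrix.mulVec (wLap G w) Vp = P)
    (Vp' : V → ℝ) (hVp' : Matrix.mulVec (wLap (G.deleteEdges {s(r, s)}) w) Vp' = P)
    (Vptdf : V → ℝ)
    (hVptdf : Matrix.mulVec (wLap G w) Vptdf =
      fun u => (if u = r then (1 : ℝ) else 0) - (if u = s then (1 : ℝ) else 0)) :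
    1 - w s(r, s) * (Vptdf r - Vptdf s) ≠ 0 ∧
    ∀ a b : V, G.Adj a b → s(a, b) ≠ s(r, s) →
      w s(a, b) * (Vp' a - Vp' b) - w s(a, b) * (Vp a - Vp b) =
        (w s(r, s) * (Vp r - Vp s)) * (w s(a, b) * (Vptdf a - Vptdf b)) /
          (1 - w s(r, s) * (Vptdf r - Vptdf s)) := by
  have hD : 1 - edgeFlow w Vptdf r s ≠ 0 :=
    one_sub_edgeFlow_ne_zero_of_unitInjection hrs hVptdf hw hGk
  refine ⟨hD, fun a b _ _ => ?_⟩
  have hwk : ∀ e ∈ (G.deleteEdges {s(r, s)}).edgeSet, 0 < w e :=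
    fun e he => hw e (edgeSet_mono (deleteEdges_le _) he)
  have hpot := sub_eq_sub_of_wLap_mulVec_eq hwk hGk
    (hVp'.trans (wLap_deleteEdges_mulVec_add_smul_of_unitInjection hrs hVptdf hVp hD).symm) a b
  simp only [edgeFlow, Pi.add_apply, Pi.smul_apply, smul_eq_mul] at hD hpot
  rw [eq_div_iff hD]
  field_simp at hpot
  linear_combination w s(a, b) * hpot

/-- **Line outage distribution factors via PTDFs.**  Let `G` be a finite
connected simple graph with positive edge weights, let `k = {r,s}` be an edge
of `G` with `G - k` connected, and let `P` be a balanced injection vector.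
Let `F` be the flows in `G` with injection `P` (potential `Vp`), `F'` the
flows in `G - k` with the same injection (potential `Vp'`), and let `Vptdf` be
a potential for the unit injection `e_r - e_s` in `G`.  Then
`1 - PTDF_{r,s,k} ≠ 0`, and for every oriented edge `m = (a,b) ≠ k` of `G`,
`F'_m - F_m = F_k · PTDF_{r,s,m} / (1 - PTDF_{r,s,k})`. -/
theorem lodf_eq_ptdf_ratio
    {V : Type*} [Fintype V] [DecidableEq V] (G : SimpleGraph V)
    (w : Sym2 V → ℝ) (hw : ∀ e ∈ G.edgeSet, 0 < w e)
    (hG : G.Connected) (r s : V) (hrs : G.Adj r s)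
    (hGk : (G.deleteEdges {s(r, s)}).Connected)
    (P : V → ℝ) (hP : ∑ u, P u = 0)
    (Vp : V → ℝ) (hVp : Matrix.mulVec (wLap G w) Vp = P)
    (Vp' : V → ℝ) (hVp' : Matrix.mulVec (wLap (G.deleteEdges {s(r, s)}) w) Vp' = P)
    (Vptdf : V → ℝ)
    (hVptdf : Matrix.mulVec (wLap G w) Vptdf =
      fun u => (if u = r then (1 : ℝ) else 0) - (if u = s then (1 : ℝ) else 0)) :
    1 - w s(r, s) * (Vptdf r - Vptdf s) ≠ 0 ∧
    ∀ a b : V, G.Adj a b → s(a, b) ≠ s(r, s) →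
      w s(a, b) * (Vp' a - Vp' b) - w s(a, b) * (Vp a - Vp b) =
        (w s(r, s) * (Vp r - Vp s)) * (w s(a, b) * (Vptdf a - Vptdf b)) /
          (1 - w s(r, s) * (Vptdf r - Vptdf s)) :=
  lodf_eq_ptdf_ratio_general G w hw r s hrs hGk P Vp hVp Vp' hVp' Vptdf hVptdf
end

section
/- Let G be a finite simple graph. For two edges e and f of G, define the rerouting distance d(e,f) as follows: d(e,e) = 0, and for e ≠ f, d(e,f) is the minimum length (number of edges) of a cycle in G containing both e and f, with d(e,f) = ∞ if no such cycle exists. Then d is an extended metric on the edge set of G: d(e,f) = 0 if and only if e = f, d(e,f) = d(f,e) for all edges e, f, and d(e,g) ≤ d(e,f) + d(f,g) for all edges e, f, g. -/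
open scoped Classical

/-- The rerouting distance between two edges of `G`: `0` if the edges are
equal, and otherwise the minimum length of a cycle of `G` containing both
edges (with value `∞` if no such cycle exists, since `sInf ∅ = ⊤` in `ℕ∞`). -/
noncomputable def reroutingDist {V : Type*} (G : SimpleGraph V) (e f : Sym2 V) : ℕ∞ :=
  if e = f then 0
  else sInf {L : ℕ∞ | ∃ (u : V) (c : G.Walk u u),
    c.IsCycle ∧ e ∈ c.edges ∧ f ∈ c.edges ∧ (c.length : ℕ∞) = L}

/-!
Only the triangle inequality needs an argument. Take cycles `C₁ ∋ e, f` and `C₂ ∋ f, g` of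
minimal length (minima exist since `ℕ∞` is well ordered) and assume `g ∉ C₁`, `e ∉ C₂`. The cycle
`C₁` meets `C₂` in at least the two ends of `f`, so the arc of `C₁` through `e` between two
consecutive vertices `a ≠ b` of `C₂` is a path meeting `C₂` only in `a` and `b`. One of the two
arcs of `C₂` between `a` and `b` contains `g`, and closing the first path up with it gives a cycle
through `e` and `g` of length at most `|C₁| + |C₂|`.
-/

namespace SimpleGraph.Walk

variable {V : Type*} {G : SimpleGraph V} {u v x y : V} {e : Sym2 V}

lemma edges_eq_singleton_of_length_eq_one {p : G.Walk u v} (h : p.length = 1) :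
    p.edges = [s(u, v)] := by
  cases p with
  | nil => simp at h
  | cons _ q => cases q with
    | nil => rfl
    | cons => simp at h

lemma IsPath.isCycle_append_of_inter_support {p : G.Walk u v} {q : G.Walk v u}
    (hp : p.IsPath) (hq : q.IsPath) (hpq : ∀ z ∈ p.support, z ∈ q.support → z = u ∨ z = v)
    (he : ∃ e ∈ p.edges, e ∉ q.edges) : (p.append q).IsCycle := by
  refine hp.isCycle_append hq (fun z hzp hzq => ?_) ?_
  · have hu : u ∉ p.support.tail := (List.nodup_cons.1 (p.cons_tail_support ▸ hp.support_nodup)).1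
    have hv : v ∉ q.support.tail := (List.nodup_cons.1 (q.cons_tail_support ▸ hq.support_nodup)).1
    rcases hpq z (List.mem_of_mem_tail hzp) (List.mem_of_mem_tail hzq) with rfl | rfl
    exacts [hu hzp, hv hzq]
  · by_contra! hlen
    obtain ⟨e, hep, heq⟩ := he
    have hp1 : p.length = 1 := by
      have := p.length_edges ▸ List.length_pos_of_mem hep
      omega
    have huv : u ≠ v := (p.adj_of_length_eq_one hp1).ne
    have hq1 : q.length = 1 := by
      have : q.length ≠ 0 := fun h => huv (q.eq_of_length_eq_zero h).symm
      omega
    rw [edges_eq_singleton_of_length_eq_one hp1, List.mem_singleton] at hep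
    rw [edges_eq_singleton_of_length_eq_one hq1, List.mem_singleton, hep] at heq
    exact heq Sym2.eq_swap

theorem exists_isSubwalk_mem_edges_forall_mem_support (S : V → Prop) {a b : V}
    (w : G.Walk a b) (ha : S a) (hb : S b) (he : e ∈ w.edges) :
    ∃ (c d : V) (Y : G.Walk c d), Y.IsSubwalk w ∧ e ∈ Y.edges ∧ S c ∧ S d ∧
      ∀ z ∈ Y.support, S z → z = c ∨ z = d := by
  by_cases h : ∃ z ∈ w.support, S z ∧ z ≠ a ∧ z ≠ b
  · obtain ⟨z, hz, hSz, hza, hzb⟩ := h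
    have := length_takeUntil_lt_length hz hzb
    have := length_dropUntil_lt_length hz hza
    rw [← w.take_spec hz, edges_append, List.mem_append] at he
    rcases he with he | he
    · obtain ⟨c, d, Y, hY, hY'⟩ :=
        exists_isSubwalk_mem_edges_forall_mem_support S _ ha hSz he
      exact ⟨c, d, Y, hY.trans (w.isSubwalk_takeUntil hz), hY'⟩
    · obtain ⟨c, d, Y, hY, hY'⟩ :=
        exists_isSubwalk_mem_edges_forall_mem_support S _ hSz hb he
      exact ⟨c, d, Y, hY.trans (w.isSubwalk_dropUntil hz), hY'⟩
  · push Not at h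
    exact ⟨a, b, w, w.isSubwalk_rfl, he, ha, hb, fun z hz hSz => by grind⟩
termination_by w.length

lemma IsCycle.exists_isPath_append_eq_rotate {c : G.Walk u u} (hc : c.IsCycle)
    (hx : x ∈ c.support) (hy : y ∈ c.support) (hxy : x ≠ y) :
    ∃ (p : G.Walk x y) (q : G.Walk y x), p.IsPath ∧ q.IsPath ∧ p.append q = c.rotate x hx := by
  have hc' := hc.rotate hx
  have hy' : y ∈ (c.rotate x hx).support := (mem_support_rotate_iff ..).mpr hy
  have hsplit := (c.rotate x hx).take_spec hy'
  refine ⟨_, _, hc'.isPath_takeUntil hy', ?_, hsplit⟩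
  exact (hsplit ▸ hc').isPath_of_append_right (not_nil_of_ne hxy)

lemma IsCycle.exists_isPath_mem_edges_forall_mem_support (S : V → Prop) {c : G.Walk u u}
    (hc : c.IsCycle) (he : e ∈ c.edges) (hx : x ∈ c.support) (hy : y ∈ c.support)
    (hxy : x ≠ y) (hSx : S x) (hSy : S y) :
    ∃ (a b : V) (P : G.Walk a b), P.IsPath ∧ e ∈ P.edges ∧ P.length ≤ c.length ∧
      S a ∧ S b ∧ ∀ z ∈ P.support, S z → z = a ∨ z = b := by
  obtain ⟨p, q, hp, hq, hpq⟩ := hc.exists_isPath_append_eq_rotate hx hy hxy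
  have hlen : p.length + q.length = c.length := by
    rw [← length_append, hpq, length_rotate]
  obtain ⟨a, b, W, hW, ha, hb, heW, hWlen⟩ : ∃ (a b : V) (W : G.Walk a b),
      W.IsPath ∧ S a ∧ S b ∧ e ∈ W.edges ∧ W.length ≤ c.length := by
    rw [← (c.rotate_edges x hx).perm.mem_iff, ← hpq, edges_append, List.mem_append] at he
    rcases he with hep | heq
    exacts [⟨x, y, p, hp, hSx, hSy, hep, by omega⟩, ⟨y, x, q, hq, hSy, hSx, heq, by omega⟩]
  obtain ⟨s, t, Y, hY, heY, hYS⟩ := exists_isSubwalk_mem_edges_forall_mem_support S W ha hb heW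
  exact ⟨s, t, Y, isPath_of_isSubwalk hY hW, heY, (length_le_of_isSubwalk hY).trans hWlen, hYS⟩

lemma IsCycle.exists_isPath_mem_edges_of_mem_support {c : G.Walk u u} (hc : c.IsCycle)
    (he : e ∈ c.edges) (hx : x ∈ c.support) (hy : y ∈ c.support) (hxy : x ≠ y) :
    ∃ D : G.Walk y x, D.IsPath ∧ e ∈ D.edges ∧ D.edges ⊆ c.edges ∧
      D.support ⊆ c.support ∧ D.length ≤ c.length := by
  obtain ⟨p, q, hp, hq, hpq⟩ := hc.exists_isPath_append_eq_rotate hx hy hxy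
  have hedges : ∀ e, e ∈ p.edges ∨ e ∈ q.edges ↔ e ∈ c.edges := fun e => by
    rw [← List.mem_append, ← edges_append, hpq, (c.rotate_edges x hx).perm.mem_iff]
  have hsupport : ∀ z, z ∈ p.support ∨ z ∈ q.support ↔ z ∈ c.support := fun z => by
    rw [← mem_support_append_iff, hpq, mem_support_rotate_iff]
  have hlen : p.length + q.length = c.length := by
    rw [← length_append, hpq, length_rotate]
  rcases (hedges e).mpr he with hep | heq
  · refine ⟨p.reverse, hp.reverse, by simpa using hep, fun e he => ?_, fun z hz => ?_, ?_⟩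
    · exact (hedges e).mp (.inl (by simpa using he))
    · exact (hsupport z).mp (.inl (by simpa using hz))
    · rw [length_reverse]; omega
  · refine ⟨q, hq, heq, fun e he => (hedges e).mp (.inr he),
      fun z hz => (hsupport z).mp (.inr hz), by omega⟩

theorem IsCycle.exists_isCycle_mem_edges_length_le_add {u₁ u₂ : V} {c₁ : G.Walk u₁ u₁}
    {c₂ : G.Walk u₂ u₂} (hc₁ : c₁.IsCycle) (hc₂ : c₂.IsCycle) {f g : Sym2 V}
    (he : e ∈ c₁.edges) (hf₁ : f ∈ c₁.edges) (hf₂ : f ∈ c₂.edges) (hg : g ∈ c₂.edges) :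
    ∃ (w : V) (c : G.Walk w w), c.IsCycle ∧ e ∈ c.edges ∧ g ∈ c.edges ∧
      c.length ≤ c₁.length + c₂.length := by
  by_cases hg₁ : g ∈ c₁.edges
  · exact ⟨u₁, c₁, hc₁, he, hg₁, by omega⟩
  by_cases he₂ : e ∈ c₂.edges
  · exact ⟨u₂, c₂, hc₂, he₂, hg, by omega⟩
  induction f using Sym2.ind with | _ x y => ?_
  obtain ⟨a, b, P, hP, heP, hPlen, ha, hb, hPc₂⟩ :=
    hc₁.exists_isPath_mem_edges_forall_mem_support (· ∈ c₂.support) he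
      (c₁.fst_mem_support_of_mem_edges hf₁) (c₁.snd_mem_support_of_mem_edges hf₁)
      (c₂.adj_of_mem_edges hf₂).ne
      (c₂.fst_mem_support_of_mem_edges hf₂) (c₂.snd_mem_support_of_mem_edges hf₂)
  have hab : a ≠ b := by
    rintro rfl
    simp [edges_eq_nil.mpr (isPath_iff_nil.mp hP)] at heP
  obtain ⟨D, hD, hgD, hDedges, hDsupport, hDlen⟩ :=
    hc₂.exists_isPath_mem_edges_of_mem_support hg ha hb hab
  refine ⟨a, P.append D, ?_, by simp [heP], by simp [hgD], by rw [length_append]; omega⟩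
  exact hP.isCycle_append_of_inter_support hD (fun z hzP hzD => hPc₂ z hzP (hDsupport hzD))
    ⟨e, heP, fun heD => he₂ (hDedges heD)⟩

end SimpleGraph.Walk

section reroutingDist

variable {V : Type*} (G : SimpleGraph V) {e f : Sym2 V}

lemma reroutingDist_self (e : Sym2 V) : reroutingDist G e e = 0 := if_pos rfl

lemma reroutingDist_le_length {u : V} {c : G.Walk u u} (hc : c.IsCycle) (he : e ∈ c.edges)
    (hf : f ∈ c.edges) : reroutingDist G e f ≤ c.length := by
  unfold reroutingDist
  split_ifs
  exacts [zero_le, sInf_le ⟨u, c, hc, he, hf, rfl⟩]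

lemma three_le_reroutingDist (hef : e ≠ f) : 3 ≤ reroutingDist G e f := by
  rw [reroutingDist, if_neg hef]
  refine le_sInf ?_
  rintro _ ⟨u, c, hc, -, -, rfl⟩
  exact_mod_cast hc.three_le_length

lemma reroutingDist_eq_zero_iff : reroutingDist G e f = 0 ↔ e = f := by
  refine ⟨fun h => ?_, fun h => h ▸ reroutingDist_self G e⟩
  by_contra hef
  simpa [h] using three_le_reroutingDist G hef

lemma reroutingDist_comm (e f : Sym2 V) : reroutingDist G e f = reroutingDist G f e := by
  simp only [reroutingDist, eq_comm (a := e), and_left_comm (a := e ∈ _)]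

lemma exists_isCycle_length_eq_reroutingDist (hef : e ≠ f) (h : reroutingDist G e f ≠ ⊤) :
    ∃ (u : V) (c : G.Walk u u), c.IsCycle ∧ e ∈ c.edges ∧ f ∈ c.edges ∧
      (c.length : ℕ∞) = reroutingDist G e f := by
  rw [reroutingDist, if_neg hef] at h ⊢
  have hne : {L : ℕ∞ | ∃ (u : V) (c : G.Walk u u),
      c.IsCycle ∧ e ∈ c.edges ∧ f ∈ c.edges ∧ (c.length : ℕ∞) = L}.Nonempty :=
    Set.nonempty_iff_ne_empty.mpr fun hempty => h (by rw [hempty, sInf_empty])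
  exact csInf_mem hne

lemma reroutingDist_triangle (e f g : Sym2 V) :
    reroutingDist G e g ≤ reroutingDist G e f + reroutingDist G f g := by
  rcases eq_or_ne e f with rfl | hef
  · simp [reroutingDist_self]
  rcases eq_or_ne f g with rfl | hfg
  · simp [reroutingDist_self]
  rcases eq_or_ne (reroutingDist G e f) ⊤ with h₁ | h₁
  · simp [h₁]
  rcases eq_or_ne (reroutingDist G f g) ⊤ with h₂ | h₂
  · simp [h₂]
  obtain ⟨u₁, c₁, hc₁, he, hf₁, hlen₁⟩ := exists_isCycle_length_eq_reroutingDist G hef h₁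
  obtain ⟨u₂, c₂, hc₂, hf₂, hg, hlen₂⟩ := exists_isCycle_length_eq_reroutingDist G hfg h₂
  obtain ⟨w, c, hc, hec, hgc, hlen⟩ :=
    hc₁.exists_isCycle_mem_edges_length_le_add hc₂ he hf₁ hf₂ hg
  calc reroutingDist G e g ≤ c.length := reroutingDist_le_length G hc hec hgc
    _ ≤ c₁.length + c₂.length := by exact_mod_cast hlen
    _ = reroutingDist G e f + reroutingDist G f g := by rw [← hlen₁, ← hlen₂]

end reroutingDist

theorem reroutingDist_is_extended_metric_general
    {V : Type*} (G : SimpleGraph V) :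
    (∀ e ∈ G.edgeSet, ∀ f ∈ G.edgeSet, (reroutingDist G e f = 0 ↔ e = f)) ∧
    (∀ e ∈ G.edgeSet, ∀ f ∈ G.edgeSet, reroutingDist G e f = reroutingDist G f e) ∧
    (∀ e ∈ G.edgeSet, ∀ f ∈ G.edgeSet, ∀ g ∈ G.edgeSet,
      reroutingDist G e g ≤ reroutingDist G e f + reroutingDist G f g) :=
  ⟨fun _ _ _ _ => reroutingDist_eq_zero_iff G, fun e _ f _ => reroutingDist_comm G e f,
    fun e _ f _ g _ => reroutingDist_triangle G e f g⟩

/-- **The rerouting distance is an extended metric on the edge set.**  For a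
finite simple graph `G` and edges `e`, `f`, `g` of `G`: the rerouting distance
vanishes iff the edges coincide, it is symmetric, and it satisfies the
triangle inequality. -/
theorem reroutingDist_is_extended_metric
    {V : Type*} [Fintype V] (G : SimpleGraph V) :
    (∀ e ∈ G.edgeSet, ∀ f ∈ G.edgeSet, (reroutingDist G e f = 0 ↔ e = f)) ∧
    (∀ e ∈ G.edgeSet, ∀ f ∈ G.edgeSet, reroutingDist G e f = reroutingDist G f e) ∧
    (∀ e ∈ G.edgeSet, ∀ f ∈ G.edgeSet, ∀ g ∈ G.edgeSet,
      reroutingDist G e g ≤ reroutingDist G e f + reroutingDist G f g) :=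
  reroutingDist_is_extended_metric_general G
end
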